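/- Let w ∈ S_n, (i,j) ∈ E(w) with r = r_{i,j}(w), and let I = {i_1 < ... < i_{r+1}} ⊆ [i], J = {j_1 < ... < j_{r+1}} ⊆ [j] define an elusive minor. Suppose (i',j') ∈ E(w) with r_{i',j'}(w) < r, i_p ≤ i' < i_{p+1}, and j_ℓ ≤ j' < j_{ℓ+1} (with i_0 = j_0 = 1, indices 0 ≤ p, ℓ ≤ r). Then it is impossible that both p + ℓ > r + 1 and r_{i',j'}(w) < p + ℓ - (r+1). -/

import Mathlib

/-!
For `a ≤ i`, elusiveness forces `min (r, #(I ∩ [1,a])) ≤ r_{a,j}(w)`: at the first row where this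
fails, the box `(a, j)` lies in the Rothe diagram, and walking south and east inside the (finite)
diagram keeps the rank and ends at an essential box of rank `< r` that the minor attends.
Transposing `w` gives the same bound along column `i`. Hence `p ≤ r_{i',j}` and `ℓ ≤ r_{i,j'}`,
and submodularity of the rank, `r_{i',j} + r_{i,j'} ≤ r_{i,j} + r_{i',j'}`, yields
`p + ℓ ≤ r + r_{i',j'}`.
-/

/-- Rank function of a permutation: `rk w i j = #{a : 1 ≤ a ≤ i, w a ≤ j}`. -/
def rk (w : Equiv.Perm ℕ) (i j : ℕ) : ℕ :=
  ((Finset.Icc 1 i).filter (fun a => w a ≤ j)).card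

/-- `(i,j)` is in the Rothe diagram `D(w)`. -/
def inRothe (w : Equiv.Perm ℕ) (i j : ℕ) : Prop :=
  j < w i ∧ i < w.symm j

instance (w : Equiv.Perm ℕ) (i j : ℕ) : Decidable (inRothe w i j) := by
  unfold inRothe; infer_instance

/-- `(i,j)` is in Fulton's essential set `E(w)`. -/
def inEss (w : Equiv.Perm ℕ) (i j : ℕ) : Prop :=
  inRothe w i j ∧ ¬ inRothe w (i+1) j ∧ ¬ inRothe w i (j+1)

/-- The minor with row set `I` and column set `J` belongs to `(i,j) ∈ E(w)`. -/
def belongsTo (w : Equiv.Perm ℕ) (I J : Finset ℕ) (i j : ℕ) : Prop :=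
  inEss w i j ∧ I ⊆ Finset.Icc 1 i ∧ J ⊆ Finset.Icc 1 j ∧
    I.card = rk w i j + 1 ∧ J.card = rk w i j + 1

/-- The minor `m_{I,J}` attends `M^{[i',j']}`. -/
def attends (w : Equiv.Perm ℕ) (I J : Finset ℕ) (i' j' : ℕ) : Prop :=
  (rk w i' j' < (I ∩ Finset.Icc 1 i').card ∧ (J ∩ Finset.Icc 1 j').card = J.card) ∨
  ((I ∩ Finset.Icc 1 i').card = I.card ∧ rk w i' j' < (J ∩ Finset.Icc 1 j').card)

/-- The minor `m_{I,J}` belonging to `(i,j) ∈ E(w)` is elusive. -/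
def elusive (w : Equiv.Perm ℕ) (I J : Finset ℕ) (i j : ℕ) : Prop :=
  belongsTo w I J i j ∧
    ∀ i' j', inEss w i' j' → rk w i' j' < rk w i j → ¬ attends w I J i' j'

open Finset

theorem card_inter_Icc_mono (I : Finset ℕ) : Monotone fun a => #(I ∩ Icc 1 a) :=
  fun _ _ h => card_le_card (inter_subset_inter_left (Icc_subset_Icc_right h))

theorem card_inter_Icc_succ_le (I : Finset ℕ) (a : ℕ) :
    #(I ∩ Icc 1 (a + 1)) ≤ #(I ∩ Icc 1 a) + 1 := by
  rw [← insert_Icc_right_eq_Icc_add_one (by omega)]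
  by_cases h : a + 1 ∈ I
  · rw [inter_insert_of_mem h]
    exact card_insert_le _ _
  · rw [inter_insert_of_notMem h]
    omega

section Rank

variable {w : Equiv.Perm ℕ} {i j a b : ℕ}

theorem rk_succ_left_of_lt (h : b < w (a + 1)) : rk w (a + 1) b = rk w a b := by
  rw [rk, ← insert_Icc_right_eq_Icc_add_one (by omega), filter_insert, if_neg (by omega), rk]

theorem rk_succ_left_of_le (h : w (a + 1) ≤ b) : rk w (a + 1) b = rk w a b + 1 := by
  rw [rk, ← insert_Icc_right_eq_Icc_add_one (by omega), filter_insert, if_pos h,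
    card_insert_of_notMem (by simp), rk]

theorem rk_symm (hw0 : w 0 = 0) : rk w.symm j i = rk w i j := by
  have hw0' : w.symm 0 = 0 := w.symm_apply_eq.mpr hw0.symm
  refine (card_nbij' w w.symm (fun a ha => ?_) (fun b hb => ?_)
    (fun a _ => w.symm_apply_apply a) (fun b _ => w.apply_symm_apply b)).symm
  · simp only [coe_filter, mem_Icc, Set.mem_ofPred_eq, Equiv.symm_apply_apply] at ha ⊢
    have : w a ≠ 0 := hw0 ▸ w.injective.ne (by omega)
    omega
  · simp only [coe_filter, mem_Icc, Set.mem_ofPred_eq, Equiv.apply_symm_apply] at hb ⊢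
    have : w.symm b ≠ 0 := hw0' ▸ w.symm.injective.ne (by omega)
    omega

theorem rk_succ_right_of_lt (hw0 : w 0 = 0) (h : a < w.symm (b + 1)) :
    rk w a (b + 1) = rk w a b := by
  rw [← rk_symm hw0, rk_succ_left_of_lt h, rk_symm hw0]

theorem rk_eq_rk_add_card_filter {i' : ℕ} (hi : i' ≤ i) :
    rk w i b = rk w i' b + #((Ioc i' i).filter fun a => w a ≤ b) := by
  have hdisj : Disjoint (Icc 1 i') (Ioc i' i) :=
    disjoint_left.mpr fun x hx hx' => by simp only [mem_Icc, mem_Ioc] at hx hx'; omega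
  rw [rk, rk, ← card_union_of_disjoint (disjoint_filter_filter hdisj), ← filter_union]
  congr 2
  ext x
  simp only [mem_union, mem_Icc, mem_Ioc]
  omega

theorem rk_add_rk_le {i' j' : ℕ} (hi : i' ≤ i) (hj : j' ≤ j) :
    rk w i' j + rk w i j' ≤ rk w i j + rk w i' j' := by
  have hmono :
      #((Ioc i' i).filter fun a => w a ≤ j') ≤ #((Ioc i' i).filter fun a => w a ≤ j) :=
    card_le_card (monotone_filter_right _ fun _ _ h => h.trans hj)
  rw [rk_eq_rk_add_card_filter (b := j) hi, rk_eq_rk_add_card_filter (b := j') hi]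
  omega

end Rank

section Transpose

variable {w : Equiv.Perm ℕ} {I J : Finset ℕ} {i j : ℕ}

theorem inRothe_symm_iff : inRothe w.symm j i ↔ inRothe w i j := by
  rw [inRothe, inRothe, Equiv.symm_symm, and_comm]

theorem inEss_symm_iff : inEss w.symm j i ↔ inEss w i j := by
  simp only [inEss, inRothe_symm_iff]
  tauto

theorem attends_symm_iff (hw0 : w 0 = 0) : attends w.symm J I j i ↔ attends w I J i j := by
  rw [attends, attends, rk_symm hw0, or_comm, and_comm, and_comm (a := _ = #I)]

theorem elusive.symm (hw0 : w 0 = 0) (hel : elusive w I J i j) : elusive w.symm J I j i := by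
  obtain ⟨⟨hess, hI, hJ, hIcard, hJcard⟩, hnot⟩ := hel
  refine ⟨⟨inEss_symm_iff.mpr hess, hJ, hI, ?_, ?_⟩, fun b a hba hlt => ?_⟩
  · rwa [rk_symm hw0]
  · rwa [rk_symm hw0]
  · rw [attends_symm_iff hw0]
    exact hnot a b (inEss_symm_iff.mp hba) (by rwa [rk_symm hw0, rk_symm hw0] at hlt)

end Transpose

section FiniteSupport

variable {n : ℕ} {w : Equiv.Perm ℕ} {I J : Finset ℕ} {i j : ℕ}

theorem inRothe.le {a b : ℕ} (hw : ∀ a, a ∉ Icc 1 n → w a = a) (h : inRothe w a b) :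
    a ≤ n := by
  obtain ⟨hb, ha⟩ := h
  by_contra! hna
  have hwa : w a = a := hw a (by simp only [mem_Icc]; omega)
  have hsb : w.symm b ∈ Icc 1 n := by
    by_contra hsb
    have := hw _ hsb
    rw [Equiv.apply_symm_apply] at this
    omega
  rw [mem_Icc] at hsb
  omega

theorem inRothe.add_le {a b : ℕ} (hw : ∀ a, a ∉ Icc 1 n → w a = a) (h : inRothe w a b) :
    a + b ≤ 2 * n := by
  have ha := h.le hw
  have hb := (inRothe_symm_iff.mpr h).le fun c hc => w.symm_apply_eq.mpr (hw c hc).symm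
  omega

theorem inRothe.exists_inEss {a b : ℕ} (hw : ∀ a, a ∉ Icc 1 n → w a = a)
    (h : inRothe w a b) :
    ∃ e f, inEss w e f ∧ a ≤ e ∧ b ≤ f ∧ rk w e f = rk w a b := by
  by_cases hs : inRothe w (a + 1) b
  · obtain ⟨e, f, hef, hae, hbf, hrk⟩ := hs.exists_inEss hw
    exact ⟨e, f, hef, by omega, hbf, hrk.trans (rk_succ_left_of_lt hs.1)⟩
  by_cases he : inRothe w a (b + 1)
  · obtain ⟨e, f, hef, hae, hbf, hrk⟩ := he.exists_inEss hw
    exact ⟨e, f, hef, hae, by omega, hrk.trans (rk_succ_right_of_lt (hw 0 (by simp)) he.2)⟩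
  exact ⟨a, b, ⟨h, hs, he⟩, le_rfl, le_rfl, rfl⟩
termination_by 2 * n - (a + b)
decreasing_by
  · have := hs.add_le hw; omega
  · have := he.add_le hw; omega

theorem elusive.min_le_rk_of_inRothe {a b : ℕ} (hw : ∀ a, a ∉ Icc 1 n → w a = a)
    (hel : elusive w I J i j) (hab : inRothe w a b) (hjb : j ≤ b) :
    min (rk w i j) #(I ∩ Icc 1 a) ≤ rk w a b := by
  obtain ⟨e, f, hef, hae, hbf, hrk⟩ := hab.exists_inEss hw
  by_contra! hlt
  refine hel.2 e f hef (by omega) (Or.inl ⟨?_, ?_⟩)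
  · calc rk w e f = rk w a b := hrk
      _ < #(I ∩ Icc 1 a) := by omega
      _ ≤ #(I ∩ Icc 1 e) := card_inter_Icc_mono I hae
  · rw [inter_eq_left.mpr (hel.1.2.2.1.trans (Icc_subset_Icc_right (hjb.trans hbf)))]

theorem elusive.min_le_rk_row {a : ℕ} (hw : ∀ a, a ∉ Icc 1 n → w a = a)
    (hel : elusive w I J i j) (ha : a ≤ i) :
    min (rk w i j) #(I ∩ Icc 1 a) ≤ rk w a j := by
  induction a with
  | zero => simp
  | succ a ih =>
    by_cases hle : w (a + 1) ≤ j
    · have := ih (by omega)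
      have := card_inter_Icc_succ_le I a
      rw [rk_succ_left_of_le hle]
      omega
    · exact hel.min_le_rk_of_inRothe hw ⟨not_le.mp hle, ha.trans_lt hel.1.1.1.2⟩ le_rfl

theorem elusive.min_le_rk_col {b : ℕ} (hw : ∀ a, a ∉ Icc 1 n → w a = a)
    (hel : elusive w I J i j) (hb : b ≤ j) :
    min (rk w i j) #(J ∩ Icc 1 b) ≤ rk w i b := by
  have hw0 : w 0 = 0 := hw 0 (by simp)
  simpa only [rk_symm hw0] using
    (hel.symm hw0).min_le_rk_row (fun c hc => w.symm_apply_eq.mpr (hw c hc).symm) hb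

end FiniteSupport

theorem no_bad_position_general (n : ℕ) (w : Equiv.Perm ℕ)
    (hw : ∀ a, a ∉ Finset.Icc 1 n → w a = a)
    (i j r : ℕ) (I J : Finset ℕ)
    (hr : r = rk w i j)
    (hel : elusive w I J i j)
    (iSeq jSeq : ℕ → ℕ)
    (hiSeq : ∀ k, 1 ≤ k → k ≤ r + 1 →
      iSeq k ∈ I ∧ (I ∩ Finset.Icc 1 (iSeq k)).card = k)
    (hjSeq : ∀ k, 1 ≤ k → k ≤ r + 1 →
      jSeq k ∈ J ∧ (J ∩ Finset.Icc 1 (jSeq k)).card = k)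
    (p ℓ i' j' : ℕ) (hp : p ≤ r) (hl : ℓ ≤ r)
    (h1 : iSeq p ≤ i') (h2 : i' < iSeq (p + 1))
    (h3 : jSeq ℓ ≤ j') (h4 : j' < jSeq (ℓ + 1)) :
    ¬ (r + 1 < p + ℓ ∧ rk w i' j' + (r + 1) < p + ℓ) := by
  rintro ⟨-, hbad⟩
  obtain ⟨-, hI, hJ, -, -⟩ := hel.1
  have hi : i' ≤ i := by
    have := mem_Icc.mp (hI (hiSeq (p + 1) (by omega) (by omega)).1)
    omega
  have hj : j' ≤ j := by
    have := mem_Icc.mp (hJ (hjSeq (ℓ + 1) (by omega) (by omega)).1)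
    omega
  have hpI : p ≤ #(I ∩ Icc 1 i') := by
    rcases p.eq_zero_or_pos with rfl | hp0
    · exact Nat.zero_le _
    · exact (hiSeq p hp0 (by omega)).2 ▸ card_inter_Icc_mono I h1
  have hlJ : ℓ ≤ #(J ∩ Icc 1 j') := by
    rcases ℓ.eq_zero_or_pos with rfl | hl0
    · exact Nat.zero_le _
    · exact (hjSeq ℓ hl0 (by omega)).2 ▸ card_inter_Icc_mono J h3
  have hrow := hel.min_le_rk_row hw hi
  have hcol := hel.min_le_rk_col hw hj
  have hsub := rk_add_rk_le (w := w) hi hj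
  omega

/-- in the setting of the proof of Theorem 1.5, with i_p ≤ i' < i_{p+1}
and j_ℓ ≤ j' < j_{ℓ+1} (i_0 = j_0 = 1), it cannot happen that both p + ℓ > r + 1 and
r_{i',j'}(w) < p + ℓ - (r+1). -/
theorem no_bad_position (n : ℕ) (w : Equiv.Perm ℕ)
    (hw : ∀ a, a ∉ Finset.Icc 1 n → w a = a)
    (i j r : ℕ) (I J : Finset ℕ)
    (he : inEss w i j) (hr : r = rk w i j)
    (hel : elusive w I J i j)
    (iSeq jSeq : ℕ → ℕ)
    (hi0 : iSeq 0 = 1) (hj0 : jSeq 0 = 1)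
    (hiSeq : ∀ k, 1 ≤ k → k ≤ r + 1 →
      iSeq k ∈ I ∧ (I ∩ Finset.Icc 1 (iSeq k)).card = k)
    (hjSeq : ∀ k, 1 ≤ k → k ≤ r + 1 →
      jSeq k ∈ J ∧ (J ∩ Finset.Icc 1 (jSeq k)).card = k)
    (p ℓ i' j' : ℕ) (hp : p ≤ r) (hl : ℓ ≤ r)
    (he' : inEss w i' j') (hr' : rk w i' j' < r)
    (h1 : iSeq p ≤ i') (h2 : i' < iSeq (p + 1))
    (h3 : jSeq ℓ ≤ j') (h4 : j' < jSeq (ℓ + 1)) :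
    ¬ (r + 1 < p + ℓ ∧ rk w i' j' + (r + 1) < p + ℓ) :=
  no_bad_position_general n w hw i j r I J hr hel iSeq jSeq hiSeq hjSeq p ℓ i' j' hp hl h1 h2 h3 h4
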